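/- arXiv:0909.5604 — 3 statements merged into one kernel-verified Lean document; each statement's English description precedes it below -/
import Mathlib

section
/- Let D ⊂ ℂⁿ be a bounded domain, let H₂, H₃ : ℂⁿ → ℂ be homogeneous holomorphic polynomials of degrees 2 and 3 respectively, define Ψ(z) := z_n + 2H₂(z) + 2H₃(z), and suppose there are ρ > 0 and C₃ > 0 with D ∩ B(0,ρ) ⊆ {z : Re Ψ(z) < C₃‖z‖⁴} and (0,…,0,−δ) ∈ D for all sufficiently small δ > 0. Then there exist constants C₅, C₆ > 0 and δ₀ > 0 such that for every 0 < δ < δ₀, every 0 < s < 1, and every holomorphic map φ : 𝔻 → D with φ(0) = (0,…,0,−δ): (a) Re Ψ(φ(sλ)) < C₅(δ + s)⁴ for all λ ∈ 𝔻, and (b) s·|(Ψ∘φ)'(0)| ≤ C₆·(δ + (δ + s)⁴). -/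
noncomputable section

open Complex Metric Set Filter

abbrev Cn (n : ℕ) := EuclideanSpace ℂ (Fin n)

/-- Wirtinger derivative `∂f/∂z_j` at `p` (computed via the real Fréchet derivative). -/
def wderiv {n : ℕ} (j : Fin n) (f : Cn n → ℂ) (p : Cn n) : ℂ :=
  (fderiv ℝ f p (EuclideanSpace.single j 1) -
    Complex.I * fderiv ℝ f p (EuclideanSpace.single j Complex.I)) / 2

/-- Conjugate Wirtinger derivative `∂f/∂z̄_j` at `p`. -/
def wderivBar {n : ℕ} (j : Fin n) (f : Cn n → ℂ) (p : Cn n) : ℂ :=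
  (fderiv ℝ f p (EuclideanSpace.single j 1) +
    Complex.I * fderiv ℝ f p (EuclideanSpace.single j Complex.I)) / 2

/-- Levi form of a complex-valued function: `∑_{j,l} ∂²f/∂z_j∂z̄_l (p) X_j conj(X_l)`. -/
def leviFormC {n : ℕ} (f : Cn n → ℂ) (p X : Cn n) : ℂ :=
  ∑ j, ∑ l, wderiv j (fun z => wderivBar l f z) p * X j * (starRingEnd ℂ) (X l)

/-- Levi form of a real-valued function. -/
def leviForm {n : ℕ} (r : Cn n → ℝ) (p X : Cn n) : ℂ :=
  leviFormC (fun z => (r z : ℂ)) p X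

/-- The pairing `⟨∂r(z), X⟩ = ∑_j ∂r/∂z_j (z) X_j`. -/
def delPair {n : ℕ} (r : Cn n → ℝ) (z X : Cn n) : ℂ :=
  ∑ j, wderiv j (fun w => (r w : ℂ)) z * X j

/-- The Kobayashi–Royden metric of `D` at `z` in direction `X`. -/
def kobayashi {n : ℕ} (D : Set (Cn n)) (z X : Cn n) : ℝ :=
  sInf {α : ℝ | 0 < α ∧ ∃ f : ℂ → Cn n, DifferentiableOn ℂ f (ball (0:ℂ) 1) ∧
    MapsTo f (ball (0:ℂ) 1) D ∧ f 0 = z ∧ α • fderiv ℂ f 0 1 = X}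

/-- `ν` is the unit outward normal vector to `∂D = {r = 0}` at `P`:  it is a unit vector
positively proportional to the (real) gradient of the defining function `r` at `P`. -/
def IsUnitOutwardNormalAt {n : ℕ} (r : Cn n → ℝ) (P ν : Cn n) : Prop :=
  ‖ν‖ = 1 ∧ ∃ c : ℝ, 0 < c ∧ ∀ v : Cn n, fderiv ℝ r P v = c * (inner ℂ v ν : ℂ).re

/-- The Levi form of `r` is positive semidefinite on the complex tangent space at every
boundary point of `D`. -/
def LeviPSDOnTangent {n : ℕ} (r : Cn n → ℝ) (D : Set (Cn n)) : Prop :=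
  ∀ p ∈ frontier D, ∀ X : Cn n, delPair r p X = 0 → 0 ≤ (leviForm r p X).re

/-!
Near the origin `Re Ψ < C₃‖z‖⁴`, and on the rest of the bounded set `D` the function `Re Ψ` is
bounded while `‖z‖` is bounded below, so `Re Ψ < C‖z‖⁴` on all of `D`. By the Schwarz lemma a
holomorphic disc `φ` in `D` with `φ 0 = (0,…,0,-δ)` satisfies `‖φ λ‖ ≤ δ + diam D · |λ|`, which
gives (a). For (b), Borel–Carathéodory for `Ψ ∘ φ - Ψ (φ 0)` on the disc of radius `s` bounds
`s |(Ψ ∘ φ)'(0)|` by twice the oscillation of `Re (Ψ ∘ φ)` there, which is `O((δ + s)⁴ + δ)`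
since `|Ψ (0,…,0,-δ)| = O(δ)` by homogeneity.
-/
open Topology

namespace Complex

theorem mul_norm_deriv_le_of_re_lt {f : ℂ → ℂ} {M R : ℝ} (hR : 0 < R)
    (hf : DifferentiableOn ℂ f (ball 0 R)) (hre : ∀ z ∈ ball 0 R, (f z).re < M) :
    R * ‖deriv f 0‖ ≤ 2 * (M - (f 0).re) := by
  have hM : 0 < M - (f 0).re := sub_pos.mpr (hre 0 (mem_ball_self hR))
  suffices ‖deriv f 0‖ ≤ 2 * (M - (f 0).re) / R by rwa [le_div_iff₀ hR, mul_comm] at this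
  have h0 : ball (0 : ℂ) R ∈ 𝓝 0 := ball_mem_nhds 0 hR
  have hslope : Tendsto (slope f 0) (𝓝[≠] 0) (𝓝 (deriv f 0)) :=
    hasDerivAt_iff_tendsto_slope.mp (hf.differentiableAt h0).hasDerivAt
  have hbound : Tendsto (fun z : ℂ => 2 * (M - (f 0).re) / (R - ‖z‖)) (𝓝[≠] 0)
      (𝓝 (2 * (M - (f 0).re) / R)) := by
    have : ContinuousAt (fun z : ℂ => 2 * (M - (f 0).re) / (R - ‖z‖)) 0 := by
      fun_prop (disch := simp [hR.ne'])
    simpa using this.tendsto.mono_left nhdsWithin_le_nhds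
  refine le_of_tendsto_of_tendsto hslope.norm hbound ?_
  filter_upwards [nhdsWithin_le_nhds h0, self_mem_nhdsWithin] with z hz hz0
  have hBC := borelCaratheodory_zero hM (hf.sub_const (f 0))
    (fun w hw => by simp only [mem_ofPred_eq, sub_re]; linarith [hre w hw]) hR hz (sub_self _)
  rw [slope_def_field, sub_zero, norm_div, div_le_iff₀ (norm_pos_iff.mpr hz0)]
  calc ‖f z - f 0‖ ≤ 2 * (M - (f 0).re) * ‖z‖ / (R - ‖z‖) := hBC
    _ = 2 * (M - (f 0).re) / (R - ‖z‖) * ‖z‖ := by ring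

end Complex

section

variable {E : Type*} [NormedAddCommGroup E]

theorem exists_forall_lt_mul_norm_pow [ProperSpace E] {D : Set E} {f : E → ℝ} {ρ C : ℝ}
    (k : ℕ) (hD : Bornology.IsBounded D) (hf : Continuous f) (hρ : 0 < ρ)
    (h : ∀ x ∈ D ∩ ball 0 ρ, f x < C * ‖x‖ ^ k) :
    ∃ C' > 0, ∀ x ∈ D, f x < C' * ‖x‖ ^ k := by
  obtain ⟨M, hM⟩ := (hD.isCompact_closure.image hf).bddAbove
  refine ⟨max C ((|M| + 1) / ρ ^ k), lt_max_of_lt_right (by positivity), fun x hx => ?_⟩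
  by_cases hxρ : ‖x‖ < ρ
  · calc f x < C * ‖x‖ ^ k := h x ⟨hx, mem_ball_zero_iff.mpr hxρ⟩
      _ ≤ _ := by gcongr; exact le_max_left _ _
  · have hρx : ρ ^ k ≤ ‖x‖ ^ k := pow_le_pow_left₀ hρ.le (not_lt.mp hxρ) k
    calc f x ≤ M := hM (mem_image_of_mem f (subset_closure hx))
      _ < |M| + 1 := by linarith [le_abs_self M]
      _ = (|M| + 1) / ρ ^ k * ρ ^ k := by field_simp
      _ ≤ (|M| + 1) / ρ ^ k * ‖x‖ ^ k := by gcongr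
      _ ≤ _ := by gcongr; exact le_max_right _ _

variable [NormedSpace ℂ E] {D : Set E} {φ : ℂ → E}

theorem norm_le_norm_add_diam_mul_of_mapsTo_ball (hD : Bornology.IsBounded D)
    (hφ : DifferentiableOn ℂ φ (ball 0 1)) (hmaps : MapsTo φ (ball 0 1) D) {z : ℂ}
    (hz : z ∈ ball 0 1) : ‖φ z‖ ≤ ‖φ 0‖ + diam D * ‖z‖ := by
  have hmaps' : MapsTo φ (ball 0 1) (closedBall (φ 0) (diam D)) := fun w hw =>
    dist_le_diam_of_mem hD (hmaps hw) (hmaps (mem_ball_self one_pos))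
  have := Complex.dist_le_div_mul_dist_of_mapsTo_ball hφ hmaps' hz
  rw [div_one, dist_zero_right, dist_eq_norm] at this
  linarith [norm_le_norm_sub_add (φ z) (φ 0)]

theorem lt_mul_add_pow_of_mapsTo_ball (hD : Bornology.IsBounded D) {f : E → ℝ} {C : ℝ}
    (hC : 0 ≤ C) {k : ℕ} (hf : ∀ x ∈ D, f x < C * ‖x‖ ^ k)
    (hφ : DifferentiableOn ℂ φ (ball 0 1)) (hmaps : MapsTo φ (ball 0 1) D) {z : ℂ} {r : ℝ}
    (hz : ‖z‖ ≤ r) (hr : r < 1) : f (φ z) < C * (1 + diam D) ^ k * (‖φ 0‖ + r) ^ k := by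
  have hnorm : ‖φ z‖ ≤ (1 + diam D) * (‖φ 0‖ + r) := by
    have := norm_le_norm_add_diam_mul_of_mapsTo_ball hD hφ hmaps
      (mem_ball_zero_iff.mpr (hz.trans_lt hr))
    nlinarith [norm_nonneg (φ 0), norm_nonneg z, diam_nonneg (s := D)]
  calc f (φ z) < C * ‖φ z‖ ^ k := hf _ (hmaps (mem_ball_zero_iff.mpr (hz.trans_lt hr)))
    _ ≤ C * ((1 + diam D) * (‖φ 0‖ + r)) ^ k := by gcongr
    _ = _ := by rw [mul_pow, mul_assoc]

end

theorem norm_apply_smul_le_of_homogeneous {E : Type*} [SMul ℂ E] {H : E → ℂ} {k : ℕ}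
    (hk : k ≠ 0) (hH : ∀ (t : ℂ) (z : E), H (t • z) = t ^ k * H z) {t : ℂ} (ht : ‖t‖ ≤ 1)
    (z : E) : ‖H (t • z)‖ ≤ ‖t‖ * ‖H z‖ := by
  rw [hH, norm_mul, norm_pow]
  gcongr
  exact pow_le_of_le_one (norm_nonneg t) ht hk

theorem norm_apply_single_last_le {n : ℕ} {H2 H3 Ψ : Cn (n + 1) → ℂ}
    (hH2hom : ∀ (t : ℂ) (z : Cn (n + 1)), H2 (t • z) = t ^ 2 * H2 z)
    (hH3hom : ∀ (t : ℂ) (z : Cn (n + 1)), H3 (t • z) = t ^ 3 * H3 z)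
    (hΨ : Ψ = fun z => z (Fin.last n) + 2 * H2 z + 2 * H3 z) {t : ℂ} (ht : ‖t‖ ≤ 1) :
    ‖Ψ (EuclideanSpace.single (Fin.last n) t)‖ ≤
      (1 + 2 * ‖H2 (EuclideanSpace.single (Fin.last n) 1)‖ +
        2 * ‖H3 (EuclideanSpace.single (Fin.last n) 1)‖) * ‖t‖ := by
  set e : Cn (n + 1) := EuclideanSpace.single (Fin.last n) 1
  have hsmul : EuclideanSpace.single (Fin.last n) t = t • e := by
    ext i; by_cases h : i = Fin.last n <;> simp [e, h]
  have h2 := norm_apply_smul_le_of_homogeneous two_ne_zero hH2hom ht e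
  have h3 := norm_apply_smul_le_of_homogeneous three_ne_zero hH3hom ht e
  calc ‖Ψ (EuclideanSpace.single (Fin.last n) t)‖ = ‖t + 2 * H2 (t • e) + 2 * H3 (t • e)‖ := by
        rw [hΨ, hsmul]; simp [e]
    _ ≤ ‖t‖ + ‖2 * H2 (t • e)‖ + ‖2 * H3 (t • e)‖ := norm_add₃_le
    _ ≤ _ := by simp only [norm_mul, norm_ofNat]; linarith

theorem statement11_general {n : ℕ} (D : Set (Cn (n + 1)))
    (hDbdd : Bornology.IsBounded D)
    (H2 H3 : Cn (n + 1) → ℂ)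
    (hH2hol : Differentiable ℂ H2) (hH3hol : Differentiable ℂ H3)
    (hH2hom : ∀ (t : ℂ) (z : Cn (n + 1)), H2 (t • z) = t ^ 2 * H2 z)
    (hH3hom : ∀ (t : ℂ) (z : Cn (n + 1)), H3 (t • z) = t ^ 3 * H3 z)
    (Ψ : Cn (n + 1) → ℂ)
    (hΨ : Ψ = fun z => z (Fin.last n) + 2 * H2 z + 2 * H3 z)
    (ρ C₃ : ℝ) (hρ : 0 < ρ)
    (hincl : D ∩ Metric.ball (0 : Cn (n + 1)) ρ ⊆ {z | (Ψ z).re < C₃ * ‖z‖ ^ 4}) :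
    ∃ C₅ : ℝ, 0 < C₅ ∧ ∃ C₆ : ℝ, 0 < C₆ ∧ ∃ δ₀ : ℝ, 0 < δ₀ ∧
      ∀ δ : ℝ, 0 < δ → δ < δ₀ → ∀ s : ℝ, 0 < s → s < 1 →
        ∀ φ : ℂ → Cn (n + 1), DifferentiableOn ℂ φ (Metric.ball (0:ℂ) 1) →
          MapsTo φ (Metric.ball (0:ℂ) 1) D →
          φ 0 = EuclideanSpace.single (Fin.last n) (-δ : ℂ) →
          (∀ lam ∈ Metric.ball (0:ℂ) 1, (Ψ (φ ((s : ℂ) * lam))).re < C₅ * (δ + s) ^ 4) ∧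
          s * ‖deriv (fun lam => Ψ (φ lam)) 0‖ ≤
            C₆ * (δ + (δ + s) ^ 4) := by
  have hΨdiff : Differentiable ℂ Ψ := hΨ ▸
    ((EuclideanSpace.proj (Fin.last n)).differentiable.add (hH2hol.const_mul 2)).add
      (hH3hol.const_mul 2)
  obtain ⟨C, hC, hlt⟩ := exists_forall_lt_mul_norm_pow 4 hDbdd
    (continuous_re.comp hΨdiff.continuous :) hρ hincl
  set K := 1 + 2 * ‖H2 (EuclideanSpace.single (Fin.last n) 1)‖ +
    2 * ‖H3 (EuclideanSpace.single (Fin.last n) 1)‖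
  set A := C * (1 + diam D) ^ 4
  have hA : 0 < A := by positivity
  refine ⟨A, hA, 2 * (A + K), by positivity, 1, one_pos, ?_⟩
  intro δ hδ hδ1 s hs hs1 φ hφ hmaps hφ0
  have hδn : ‖(-δ : ℂ)‖ = δ := by simp [abs_of_pos hδ]
  have hsmall (z : ℂ) (hz : ‖z‖ ≤ s) : (Ψ (φ z)).re < A * (δ + s) ^ 4 := by
    simpa only [hφ0, PiLp.norm_single, hδn, Function.comp_apply] using
      lt_mul_add_pow_of_mapsTo_ball hDbdd hC.le hlt hφ hmaps hz hs1
  refine ⟨fun lam hlam => hsmall _ ?_, ?_⟩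
  · rw [norm_mul, norm_real, Real.norm_of_nonneg hs.le]
    exact mul_le_of_le_one_right hs.le (mem_ball_zero_iff.mp hlam).le
  have hΨφ0 : ‖Ψ (φ 0)‖ ≤ K * δ := by
    have := norm_apply_single_last_le hH2hom hH3hom hΨ (hδn.trans_le hδ1.le)
    rwa [hδn, ← hφ0] at this
  calc s * ‖deriv (fun lam => Ψ (φ lam)) 0‖ ≤ 2 * (A * (δ + s) ^ 4 - (Ψ (φ 0)).re) :=
        Complex.mul_norm_deriv_le_of_re_lt hs
          (hΨdiff.comp_differentiableOn (hφ.mono (ball_subset_ball hs1.le)))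
          (fun z hz => hsmall z (mem_ball_zero_iff.mp hz).le)
    _ ≤ 2 * (A * (δ + s) ^ 4 + K * δ) := by
      linarith [neg_abs_le (Ψ (φ 0)).re, abs_re_le_norm (Ψ (φ 0))]
    _ ≤ 2 * (A + K) * (δ + (δ + s) ^ 4) := by
      nlinarith [mul_pos hA hδ, mul_nonneg (by positivity : 0 ≤ K) (pow_pos (add_pos hδ hs) 4).le]

/-- Let `D ⊂ ℂ^{n+1}` be a bounded domain, `H₂, H₃` homogeneous holomorphic
polynomials of degrees `2` and `3`, `Ψ(z) = z_{last} + 2H₂(z) + 2H₃(z)`, and suppose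
`D ∩ B(0,ρ) ⊆ {Re Ψ < C₃‖z‖⁴}` and `(0,…,0,-δ) ∈ D` for all small `δ > 0`.  Then there are
`C₅, C₆ > 0` and `δ₀ > 0` such that for all `0 < δ < δ₀`, `0 < s < 1`, and every holomorphic
`φ : 𝔻 → D` with `φ(0) = (0,…,0,-δ)`:  (a) `Re Ψ(φ(sλ)) < C₅(δ+s)⁴` on `𝔻`, and
(b) `s·|(Ψ∘φ)'(0)| ≤ C₆·(δ + (δ+s)⁴)`. -/
theorem statement11 {n : ℕ} (D : Set (Cn (n + 1)))
    (hDopen : IsOpen D) (hDconn : IsConnected D) (hDbdd : Bornology.IsBounded D)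
    (H2 H3 : Cn (n + 1) → ℂ)
    (hH2hol : Differentiable ℂ H2) (hH3hol : Differentiable ℂ H3)
    (hH2hom : ∀ (t : ℂ) (z : Cn (n + 1)), H2 (t • z) = t ^ 2 * H2 z)
    (hH3hom : ∀ (t : ℂ) (z : Cn (n + 1)), H3 (t • z) = t ^ 3 * H3 z)
    (Ψ : Cn (n + 1) → ℂ)
    (hΨ : Ψ = fun z => z (Fin.last n) + 2 * H2 z + 2 * H3 z)
    (ρ C₃ : ℝ) (hρ : 0 < ρ) (hC₃ : 0 < C₃)
    (hincl : D ∩ Metric.ball (0 : Cn (n + 1)) ρ ⊆ {z | (Ψ z).re < C₃ * ‖z‖ ^ 4})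
    (δ₁ : ℝ) (hδ₁ : 0 < δ₁)
    (hpts : ∀ δ : ℝ, 0 < δ → δ < δ₁ →
      (EuclideanSpace.single (Fin.last n) (-δ : ℂ) : Cn (n + 1)) ∈ D) :
    ∃ C₅ : ℝ, 0 < C₅ ∧ ∃ C₆ : ℝ, 0 < C₆ ∧ ∃ δ₀ : ℝ, 0 < δ₀ ∧
      ∀ δ : ℝ, 0 < δ → δ < δ₀ → ∀ s : ℝ, 0 < s → s < 1 →
        ∀ φ : ℂ → Cn (n + 1), DifferentiableOn ℂ φ (Metric.ball (0:ℂ) 1) →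
          MapsTo φ (Metric.ball (0:ℂ) 1) D →
          φ 0 = EuclideanSpace.single (Fin.last n) (-δ : ℂ) →
          (∀ lam ∈ Metric.ball (0:ℂ) 1, (Ψ (φ ((s : ℂ) * lam))).re < C₅ * (δ + s) ^ 4) ∧
          s * ‖deriv (fun lam => Ψ (φ lam)) 0‖ ≤
            C₆ * (δ + (δ + s) ^ 4) :=
  statement11_general D hDbdd H2 H3 hH2hol hH3hol hH2hom hH3hom Ψ hΨ ρ C₃ hρ hincl
end
end

section
/- Define q : ℂ² → ℝ by q(s,t) := e^{|s|² + |t|²}·|s² − t³|². Then the Levi form of q satisfies 𝓛q(s,t)(X) ≥ |s² − t³|²·‖X‖² for all (s,t) ∈ ℂ² and all X ∈ ℂ²; in particular q is plurisubharmonic on ℂ². -/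
noncomputable section

open Complex Metric Set Filter

/-!
Write `q = e^ν · h · h̄` with `ν z = ‖z‖²` and `h` holomorphic (here `h = s² - t³`). Since
`∂̄_l ν = z_l`, `∂_j ν = z̄_j`, `∂̄ h = 0` and `∂ h̄ = 0`, Wirtinger calculus gives
`∂_j ∂̄_l q = e^ν (A_j Ā_l + δ_jl |h|²)` with `A_j = z̄_j h + ∂_j h`. Hence
`𝓛q(z)(X) = e^{‖z‖²} (|∑ A_j X_j|² + |h z|² ‖X‖²) ≥ |h z|² ‖X‖²`.
-/

open ComplexConjugate

section Wirtinger

variable {n : ℕ} {f g : Cn n → ℂ} {p : Cn n} (j : Fin n)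

theorem wderiv_add (hf : DifferentiableAt ℝ f p) (hg : DifferentiableAt ℝ g p) :
    wderiv j (fun z => f z + g z) p = wderiv j f p + wderiv j g p := by
  simp only [wderiv, fderiv_fun_add hf hg, add_apply]
  ring

theorem wderiv_mul (hf : DifferentiableAt ℝ f p) (hg : DifferentiableAt ℝ g p) :
    wderiv j (fun z => f z * g z) p = wderiv j f p * g p + f p * wderiv j g p := by
  simp only [wderiv, fderiv_fun_mul hf hg, add_apply, smul_apply, smul_eq_mul]
  ring

theorem wderivBar_mul (hf : DifferentiableAt ℝ f p) (hg : DifferentiableAt ℝ g p) :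
    wderivBar j (fun z => f z * g z) p = wderivBar j f p * g p + f p * wderivBar j g p := by
  simp only [wderivBar, fderiv_fun_mul hf hg, add_apply, smul_apply, smul_eq_mul]
  ring

theorem wderiv_cexp (hf : DifferentiableAt ℝ f p) :
    wderiv j (fun z => cexp (f z)) p = cexp (f p) * wderiv j f p := by
  simp only [wderiv, hf.hasFDerivAt.cexp.fderiv, smul_apply, smul_eq_mul]
  ring

theorem wderivBar_cexp (hf : DifferentiableAt ℝ f p) :
    wderivBar j (fun z => cexp (f z)) p = cexp (f p) * wderivBar j f p := by
  simp only [wderivBar, hf.hasFDerivAt.cexp.fderiv, smul_apply, smul_eq_mul]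
  ring

theorem wderivBar_conj : wderivBar j (fun z => conj (f z)) p = conj (wderiv j f p) := by
  simp only [wderiv, wderivBar, ← Complex.star_def, fderiv_star]
  simp

theorem wderiv_conj : wderiv j (fun z => conj (f z)) p = conj (wderivBar j f p) := by
  simpa using (congrArg conj (wderivBar_conj j (f := fun z => conj (f z)) (p := p))).symm

theorem EuclideanSpace.single_I_eq_smul :
    EuclideanSpace.single j I = I • EuclideanSpace.single j (1 : ℂ) := by
  ext k
  simp

theorem wderiv_eq_fderiv (hg : DifferentiableAt ℂ g p) :
    wderiv j g p = fderiv ℂ g p (EuclideanSpace.single j 1) := by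
  rw [wderiv, hg.fderiv_restrictScalars ℝ, ContinuousLinearMap.coe_restrictScalars',
    EuclideanSpace.single_I_eq_smul, map_smul, smul_eq_mul]
  linear_combination (-fderiv ℂ g p (EuclideanSpace.single j 1) / 2) * I_sq

theorem wderivBar_eq_zero (hg : DifferentiableAt ℂ g p) : wderivBar j g p = 0 := by
  rw [wderivBar, hg.fderiv_restrictScalars ℝ, ContinuousLinearMap.coe_restrictScalars',
    EuclideanSpace.single_I_eq_smul, map_smul, smul_eq_mul]
  linear_combination (fderiv ℂ g p (EuclideanSpace.single j 1) / 2) * I_sq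

theorem wderiv_apply (l : Fin n) : wderiv j (fun z : Cn n => z l) p = if l = j then 1 else 0 := by
  rw [wderiv_eq_fderiv j (by fun_prop), (PiLp.hasFDerivAt_apply 2 p l).fderiv]
  simp [PiLp.single_apply]

theorem hasFDerivAt_ofReal_norm_sq :
    HasFDerivAt (fun z : Cn n => ((‖z‖ ^ 2 : ℝ) : ℂ)) (ofRealCLM.comp (2 • innerSL ℝ p)) p :=
  ofRealCLM.hasFDerivAt.comp p (hasStrictFDerivAt_norm_sq p).hasFDerivAt

theorem differentiable_ofReal_norm_sq : Differentiable ℝ (fun z : Cn n => ((‖z‖ ^ 2 : ℝ) : ℂ)) :=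
  fun _ => hasFDerivAt_ofReal_norm_sq.differentiableAt

theorem wderivBar_ofReal_norm_sq : wderivBar j (fun z : Cn n => ((‖z‖ ^ 2 : ℝ) : ℂ)) p = p j := by
  rw [wderivBar, hasFDerivAt_ofReal_norm_sq.fderiv]
  simp only [ContinuousLinearMap.comp_smul, smul_apply, ContinuousLinearMap.comp_apply,
    coe_innerSL_apply, PiLp.inner_apply, PiLp.single_apply, Complex.inner, ite_mul, one_mul,
    zero_mul, apply_ite Complex.re, conj_re, zero_re, Finset.sum_ite_eq', Finset.mem_univ,
    if_true, ofRealCLM_apply, nsmul_eq_mul, Nat.cast_ofNat, mul_re, I_re, I_im, conj_im, mul_neg,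
    sub_neg_eq_add, zero_add]
  linear_combination re_add_im (p j)

theorem wderiv_ofReal_norm_sq : wderiv j (fun z : Cn n => ((‖z‖ ^ 2 : ℝ) : ℂ)) p = conj (p j) := by
  have h := wderiv_conj j (p := p) (f := fun z : Cn n => ((‖z‖ ^ 2 : ℝ) : ℂ))
  simp only [conj_ofReal] at h
  rw [h, wderivBar_ofReal_norm_sq]

end Wirtinger

theorem sum_sum_rankOne_add_diag_mul_conj {ι : Type*} [Fintype ι] [DecidableEq ι]
    (A X : ι → ℂ) (c : ℂ) :
    ∑ j, ∑ l, (A j * conj (A l) + if l = j then c else 0) * X j * conj (X l) =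
      (∑ j, A j * X j) * conj (∑ j, A j * X j) + c * ∑ j, X j * conj (X j) := by
  rw [map_sum, Finset.sum_mul_sum, Finset.mul_sum]
  simp only [add_mul, Finset.sum_add_distrib, ite_mul, zero_mul, Finset.sum_ite_eq',
    Finset.mem_univ, if_true, map_mul]
  congr 1
  · exact Finset.sum_congr rfl fun j _ => Finset.sum_congr rfl fun l _ => by ring
  · exact Finset.sum_congr rfl fun j _ => by ring

section ExpNormSq

variable {n : ℕ} {h : Cn n → ℂ}

theorem ofReal_exp_norm_sq_mul_norm_sq (h : Cn n → ℂ) :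
    (fun z => ((Real.exp (‖z‖ ^ 2) * ‖h z‖ ^ 2 : ℝ) : ℂ)) =
      fun z => cexp ((‖z‖ ^ 2 : ℝ) : ℂ) * (h z * conj (h z)) := by
  funext z
  rw [mul_conj', ← ofReal_pow, ← ofReal_exp, ← ofReal_mul]

theorem wderivBar_exp_norm_sq_mul_norm_sq (hh : Differentiable ℂ h) (l : Fin n) (z : Cn n) :
    wderivBar l (fun z => cexp ((‖z‖ ^ 2 : ℝ) : ℂ) * (h z * conj (h z))) z =
      cexp ((‖z‖ ^ 2 : ℝ) : ℂ) * (h z * (z l * conj (h z) + conj (wderiv l h z))) := by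
  have hhR := hh.restrictScalars ℝ
  have hν := differentiable_ofReal_norm_sq (n := n)
  rw [wderivBar_mul l (hν z).cexp (by fun_prop), wderivBar_cexp l (hν z),
    wderivBar_ofReal_norm_sq, wderivBar_mul l (by fun_prop) (by fun_prop), wderivBar_conj,
    wderivBar_eq_zero l (hh z)]
  ring

theorem ContDiff.differentiable_wderiv (hh : ContDiff ℂ 2 h) (l : Fin n) :
    Differentiable ℂ (wderiv l h) := by
  have hh1 : Differentiable ℂ h := hh.differentiable (by norm_num)
  rw [show wderiv l h = fun z => fderiv ℂ h z (EuclideanSpace.single l 1) from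
    funext fun z => wderiv_eq_fderiv l (hh1 z)]
  exact ((hh.fderiv_right (m := 1) (by norm_num)).clm_apply contDiff_const).differentiable
    (by norm_num)

theorem wderiv_wderivBar_exp_norm_sq_mul_norm_sq (hh : ContDiff ℂ 2 h) (j l : Fin n) (p : Cn n) :
    wderiv j (fun z => wderivBar l (fun z => cexp ((‖z‖ ^ 2 : ℝ) : ℂ) * (h z * conj (h z))) z) p =
      cexp ((‖p‖ ^ 2 : ℝ) : ℂ) * ((conj (p j) * h p + wderiv j h p) *
        conj (conj (p l) * h p + wderiv l h p) + if l = j then h p * conj (h p) else 0) := by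
  have hh1 : Differentiable ℂ h := hh.differentiable (by norm_num)
  have hd := hh.differentiable_wderiv l
  have hhR := hh1.restrictScalars ℝ
  have hdR := hd.restrictScalars ℝ
  have hν := differentiable_ofReal_norm_sq (n := n)
  simp only [wderivBar_exp_norm_sq_mul_norm_sq hh1 l]
  rw [wderiv_mul j (hν p).cexp (by fun_prop), wderiv_cexp j (hν p), wderiv_ofReal_norm_sq,
    wderiv_mul j (by fun_prop) (by fun_prop), wderiv_add j (by fun_prop) (by fun_prop),
    wderiv_mul j (by fun_prop) (by fun_prop), wderiv_apply, wderiv_conj, wderiv_conj,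
    wderivBar_eq_zero j (hh1 p), wderivBar_eq_zero j (hd p)]
  split_ifs <;> simp <;> ring

theorem leviForm_exp_norm_sq_mul_norm_sq (hh : ContDiff ℂ 2 h) (p X : Cn n) :
    leviForm (fun z => Real.exp (‖z‖ ^ 2) * ‖h z‖ ^ 2) p X =
      ((Real.exp (‖p‖ ^ 2) *
        (‖∑ j, (conj (p j) * h p + wderiv j h p) * X j‖ ^ 2 + ‖h p‖ ^ 2 * ‖X‖ ^ 2) : ℝ) : ℂ) := by
  set A : Fin n → ℂ := fun j => conj (p j) * h p + wderiv j h p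
  calc leviForm (fun z => Real.exp (‖z‖ ^ 2) * ‖h z‖ ^ 2) p X
      = ∑ j, ∑ l, cexp ((‖p‖ ^ 2 : ℝ) : ℂ) * ((A j * conj (A l) +
          if l = j then h p * conj (h p) else 0) * X j * conj (X l)) := by
        rw [leviForm, leviFormC, ofReal_exp_norm_sq_mul_norm_sq]
        simp only [wderiv_wderivBar_exp_norm_sq_mul_norm_sq hh, mul_assoc]
        rfl
    _ = cexp ((‖p‖ ^ 2 : ℝ) : ℂ) * ((∑ j, A j * X j) * conj (∑ j, A j * X j) +
          h p * conj (h p) * ∑ j, X j * conj (X j)) := by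
        simp only [← Finset.mul_sum, sum_sum_rankOne_add_diag_mul_conj]
    _ = _ := by
        simp only [mul_conj', EuclideanSpace.norm_sq_eq]
        push_cast
        rfl

theorem norm_sq_mul_norm_sq_le_re_leviForm (hh : ContDiff ℂ 2 h) (p X : Cn n) :
    ‖h p‖ ^ 2 * ‖X‖ ^ 2 ≤ (leviForm (fun z => Real.exp (‖z‖ ^ 2) * ‖h z‖ ^ 2) p X).re := by
  rw [leviForm_exp_norm_sq_mul_norm_sq hh, ofReal_re]
  calc ‖h p‖ ^ 2 * ‖X‖ ^ 2
      ≤ ‖∑ j, (conj (p j) * h p + wderiv j h p) * X j‖ ^ 2 + ‖h p‖ ^ 2 * ‖X‖ ^ 2 :=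
        le_add_of_nonneg_left (by positivity)
    _ ≤ _ := le_mul_of_one_le_left (by positivity) (Real.one_le_exp (by positivity))

end ExpNormSq

/-- For `q(s,t) := e^{|s|²+|t|²}·|s²-t³|²` on `ℂ²` one has
`𝓛q(s,t)(X) ≥ |s²-t³|²·‖X‖²` for all `(s,t)` and `X`; in particular `q` is
plurisubharmonic on `ℂ²`. -/
theorem statement12 (q : Cn 2 → ℝ)
    (hq : q = fun z => Real.exp (‖z‖ ^ 2) * ‖(z 0) ^ 2 - (z 1) ^ 3‖ ^ 2) :
    (∀ (z X : Cn 2),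
      ‖(z 0) ^ 2 - (z 1) ^ 3‖ ^ 2 * ‖X‖ ^ 2 ≤ (leviForm q z X).re) ∧
    (∀ (z X : Cn 2), 0 ≤ (leviForm q z X).re) := by
  have hh : ContDiff ℂ 2 fun z : Cn 2 => z 0 ^ 2 - z 1 ^ 3 := by fun_prop
  have hbound := norm_sq_mul_norm_sq_le_re_leviForm hh
  subst hq
  exact ⟨hbound, fun z X => (by positivity : (0 : ℝ) ≤ _).trans (hbound z X)⟩
end
end

section
/- Let m and l be positive integers with m/2 ≤ l < m, and define p : ℂ → ℝ by p(z) := 2m²·z^{m+l}·z̄^{m−l} + 4(m²−l²)·|z|^{2m} + 2m²·z^{m−l}·z̄^{m+l}, so that p(re^{iθ}) = r^{2m}·(4m²·cos(2lθ) + 4(m²−l²)). Then p is real-valued and subharmonic on ℂ, and there exists z ∈ ℂ with p(z) < 0. -/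
noncomputable section

open Complex Metric Set Filter

/-!
In polar coordinates `z ^ a * conj z ^ b = r ^ (a + b) * exp (i (a - b) θ)`, which gives
`p (r e^{iθ}) = r^{2m} (4m² cos 2lθ + 4(m² - l²))`: `p` is real and `p (e^{iπ/(2l)}) = -4l² < 0`.
Since `Δ = 4 ∂_z ∂_z̄` sends `z ^ a * conj z ^ b` to `4ab z^{a-1} conj z^{b-1}`, the same polar
computation gives `Δp (r e^{iθ}) = 16 m² (m² - l²) r^{2(m-1)} (1 + cos 2lθ) ≥ 0`.
-/

open InnerProductSpace Laplacian

def conjMonomial (a b : ℕ) (z : ℂ) : ℂ := z ^ a * (starRingEnd ℂ) z ^ b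

lemma conjMonomial_polar (a b : ℕ) (r θ : ℝ) :
    conjMonomial a b (r * exp (θ * I)) = r ^ (a + b) * exp (((a : ℂ) - b) * θ * I) := by
  have hconj : (starRingEnd ℂ) (r * exp (θ * I)) = r * exp (-(θ * I)) := by
    rw [map_mul, conj_ofReal, ← exp_conj]
    simp
  rw [conjMonomial, hconj, mul_pow, mul_pow, ← exp_nat_mul, ← exp_nat_mul,
    mul_mul_mul_comm, ← pow_add, ← exp_add]
  ring_nf

lemma conjMonomial_add_swap_polar (a b : ℕ) (r θ : ℝ) :
    conjMonomial a b (r * exp (θ * I)) + conjMonomial b a (r * exp (θ * I)) =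
      ((2 * r ^ (a + b) * Real.cos (((a : ℝ) - b) * θ) : ℝ) : ℂ) := by
  have h := two_cos ((((a : ℝ) - b) * θ : ℝ) : ℂ)
  rw [conjMonomial_polar, conjMonomial_polar, add_comm b a]
  push_cast at h ⊢
  rw [show ((b : ℂ) - a) * θ * I = -((a - b) * θ) * I by ring]
  linear_combination -(r : ℂ) ^ (a + b) * h

lemma conjMonomial_self (a : ℕ) (z : ℂ) : conjMonomial a a z = (‖z‖ : ℂ) ^ (2 * a) := by
  rw [conjMonomial, ← mul_pow, mul_conj', pow_mul]

lemma contDiff_conjMonomial (a b : ℕ) {n : WithTop ℕ∞} : ContDiff ℝ n (conjMonomial a b) :=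
  (contDiff_id.pow a).mul (conjCLE.contDiff.pow b)

lemma hasFDerivAt_conjMonomial (a b : ℕ) (z : ℂ) :
    HasFDerivAt (conjMonomial a b)
      ((a * conjMonomial (a - 1) b z) • ContinuousLinearMap.id ℝ ℂ +
        (b * conjMonomial a (b - 1) z) • conjCLE.toContinuousLinearMap) z := by
  have hpow := (hasDerivAt_pow a z).hasFDerivAt.restrictScalars ℝ
  have hconjPow := ((hasDerivAt_pow b ((starRingEnd ℂ) z)).hasFDerivAt.restrictScalars ℝ).comp z
    conjCLE.toContinuousLinearMap.hasFDerivAt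
  refine (hpow.mul hconjPow).congr_fderiv ?_
  ext w
  simp only [Function.comp_apply, add_apply, smul_apply, ContinuousLinearMap.comp_apply,
    ContinuousLinearEquiv.coe_coe, ContinuousAlgEquiv.coeCLE_apply, conjCAE_apply,
    ContinuousLinearMap.coe_restrictScalars', ContinuousLinearMap.toSpanSingleton_apply,
    smul_eq_mul, conjMonomial, ContinuousLinearMap.id_apply]
  ring

lemma laplacian_conjMonomial (a b : ℕ) (z : ℂ) :
    Δ (conjMonomial a b) z = 4 * a * b * conjMonomial (a - 1) (b - 1) z := by
  have hD : fderiv ℝ (conjMonomial a b) = fun w =>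
      (a * conjMonomial (a - 1) b w) • ContinuousLinearMap.id ℝ ℂ +
        (b * conjMonomial a (b - 1) w) • conjCLE.toContinuousLinearMap :=
    funext fun w => (hasFDerivAt_conjMonomial a b w).fderiv
  have hD2 := (((hasFDerivAt_conjMonomial (a - 1) b z).const_mul (a : ℂ)).smul_const
    (ContinuousLinearMap.id ℝ ℂ)).add
    (((hasFDerivAt_conjMonomial a (b - 1) z).const_mul (b : ℂ)).smul_const
      conjCLE.toContinuousLinearMap)
  rw [laplacian_eq_iteratedFDeriv_complexPlane]
  dsimp only
  rw [iteratedFDeriv_two_apply, iteratedFDeriv_two_apply, hD, ← Pi.add_def, hD2.fderiv]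
  simp only [conjMonomial, smul_add, Fin.isValue, Matrix.cons_val_zero, add_apply,
    ContinuousLinearMap.smulRight_apply, smul_apply, ContinuousLinearMap.id_apply, smul_eq_mul,
    mul_one, ContinuousLinearEquiv.coe_coe, ContinuousAlgEquiv.coeCLE_apply, conjCAE_apply, map_one,
    Matrix.cons_val_one, Matrix.cons_val_fin_one, conj_I, mul_neg]
  ring_nf
  rw [I_sq]
  ring

lemma re_laplacian_eq_iteratedFDeriv {f : ℂ → ℂ} {z : ℂ} (hf : ContDiffAt ℝ 2 f z) :
    (Δ f z).re = iteratedFDeriv ℝ 2 (fun w => (f w).re) z ![1, 1] +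
      iteratedFDeriv ℝ 2 (fun w => (f w).re) z ![I, I] := by
  rw [← congrFun (laplacian_eq_iteratedFDeriv_complexPlane _) z]
  exact (hf.laplacian_CLM_comp_left (l := reCLM)).symm

def cosPoly (m l : ℕ) : ℂ → ℂ :=
  (2 * m ^ 2 : ℂ) • (conjMonomial (m + l) (m - l) + conjMonomial (m - l) (m + l)) +
    (4 * (m ^ 2 - l ^ 2) : ℂ) • conjMonomial m m

lemma cosPoly_apply (m l : ℕ) (z : ℂ) :
    cosPoly m l z = 2 * (m : ℂ) ^ 2 * z ^ (m + l) * ((starRingEnd ℂ) z) ^ (m - l)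
      + 4 * ((m : ℂ) ^ 2 - (l : ℂ) ^ 2) * ((‖z‖ : ℝ) : ℂ) ^ (2 * m)
      + 2 * (m : ℂ) ^ 2 * z ^ (m - l) * ((starRingEnd ℂ) z) ^ (m + l) := by
  simp only [cosPoly, Pi.add_apply, Pi.smul_apply, smul_eq_mul, conjMonomial_self]
  simp only [conjMonomial]
  ring

lemma contDiff_cosPoly (m l : ℕ) {n : WithTop ℕ∞} : ContDiff ℝ n (cosPoly m l) :=
  ((((contDiff_conjMonomial (m + l) (m - l)).add (contDiff_conjMonomial (m - l) (m + l))).const_smul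
    (2 * m ^ 2 : ℂ)).add ((contDiff_conjMonomial m m).const_smul (4 * (m ^ 2 - l ^ 2) : ℂ)) :)

lemma cosPoly_polar {m l : ℕ} (h : l ≤ m) (r θ : ℝ) :
    cosPoly m l (r * exp (θ * I)) =
      ((r ^ (2 * m) * (4 * m ^ 2 * Real.cos (2 * l * θ) + 4 * (m ^ 2 - l ^ 2)) : ℝ) : ℂ) := by
  simp only [cosPoly, Pi.add_apply, Pi.smul_apply, smul_eq_mul]
  rw [conjMonomial_add_swap_polar, conjMonomial_polar, show m + l + (m - l) = 2 * m by omega,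
    ← two_mul]
  push_cast [Nat.cast_sub h, sub_self, zero_mul, exp_zero]
  ring_nf

lemma laplacian_cosPoly (m l : ℕ) (z : ℂ) :
    Δ (cosPoly m l) z = 8 * (m : ℂ) ^ 2 * (((m + l : ℕ) : ℂ) * (m - l : ℕ) *
      (conjMonomial (m + l - 1) (m - l - 1) z + conjMonomial (m - l - 1) (m + l - 1) z) +
        2 * (m ^ 2 - l ^ 2) * conjMonomial (m - 1) (m - 1) z) := by
  have hM (a b : ℕ) : ContDiffAt ℝ 2 (conjMonomial a b) z := (contDiff_conjMonomial a b).contDiffAt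
  have hSym : ContDiffAt ℝ 2 (conjMonomial (m + l) (m - l) + conjMonomial (m - l) (m + l)) z :=
    (hM _ _).add (hM _ _)
  have hSmulSym : ContDiffAt ℝ 2
      ((2 * m ^ 2 : ℂ) • (conjMonomial (m + l) (m - l) + conjMonomial (m - l) (m + l))) z :=
    hSym.const_smul (2 * m ^ 2 : ℂ)
  have hSmulSelf : ContDiffAt ℝ 2 ((4 * (m ^ 2 - l ^ 2) : ℂ) • conjMonomial m m) z :=
    (hM m m).const_smul (4 * (m ^ 2 - l ^ 2) : ℂ)
  rw [cosPoly, hSmulSym.laplacian_add hSmulSelf, laplacian_smul _ hSym, laplacian_smul _ (hM _ _),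
    (hM _ _).laplacian_add (hM _ _)]
  simp only [laplacian_conjMonomial, smul_eq_mul]
  ring

lemma laplacian_cosPoly_polar {m l : ℕ} (h : l < m) (r θ : ℝ) :
    Δ (cosPoly m l) (r * exp (θ * I)) =
      ((16 * m ^ 2 * (m ^ 2 - l ^ 2) * r ^ (2 * (m - 1)) * (Real.cos (2 * l * θ) + 1) : ℝ) :
        ℂ) := by
  have hsum := conjMonomial_add_swap_polar (m + l - 1) (m - l - 1) r θ
  have hdiff : ((m + l - 1 : ℕ) : ℝ) - (m - l - 1 : ℕ) = 2 * l := by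
    rw [show m + l - 1 = m - l - 1 + 2 * l by omega]
    push_cast
    ring
  rw [hdiff, show m + l - 1 + (m - l - 1) = 2 * (m - 1) by omega] at hsum
  rw [laplacian_cosPoly, hsum, conjMonomial_polar (m - 1), ← two_mul, sub_self, zero_mul, zero_mul,
    exp_zero]
  push_cast [Nat.cast_sub h.le]
  ring

theorem statement13_general (m l : ℕ) (hl : 0 < l) (hml2 : l < m)
    (p : ℂ → ℂ)
    (hp : p = fun z => 2 * (m : ℂ) ^ 2 * z ^ (m + l) * ((starRingEnd ℂ) z) ^ (m - l)
      + 4 * ((m : ℂ) ^ 2 - (l : ℂ) ^ 2) * ((‖z‖ : ℝ) : ℂ) ^ (2 * m)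
      + 2 * (m : ℂ) ^ 2 * z ^ (m - l) * ((starRingEnd ℂ) z) ^ (m + l)) :
    (∀ z : ℂ, (p z).im = 0) ∧
    (∀ z : ℂ, 0 ≤ iteratedFDeriv ℝ 2 (fun w => (p w).re) z ![1, 1] +
      iteratedFDeriv ℝ 2 (fun w => (p w).re) z ![Complex.I, Complex.I]) ∧
    (∃ z : ℂ, (p z).re < 0) := by
  obtain rfl : p = cosPoly m l := hp ▸ funext fun z => (cosPoly_apply m l z).symm
  have polar (z : ℂ) : z = ‖z‖ * exp (arg z * I) := (norm_mul_exp_arg_mul_I z).symm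
  refine ⟨fun z => ?_, fun z => ?_, ⟨exp ((Real.pi / (2 * l) : ℝ) * I), ?_⟩⟩
  · rw [polar z, cosPoly_polar hml2.le]
    exact ofReal_im _
  · rw [← re_laplacian_eq_iteratedFDeriv (contDiff_cosPoly m l).contDiffAt, polar z,
      laplacian_cosPoly_polar hml2, ofReal_re]
    have hlm : 0 ≤ (m : ℝ) ^ 2 - l ^ 2 := sub_nonneg.2 (by gcongr)
    have hcos : 0 ≤ Real.cos (2 * l * arg z) + 1 := by
      linarith [Real.neg_one_le_cos (2 * l * arg z)]
    exact mul_nonneg (mul_nonneg (mul_nonneg (by positivity) hlm) (by positivity)) hcos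
  · rw [← one_mul (exp _), ← ofReal_one, cosPoly_polar hml2.le, ofReal_re,
      mul_div_cancel₀ _ (by positivity : (2 * l : ℝ) ≠ 0), Real.cos_pi, one_pow]
    have : (0 : ℝ) < l := by exact_mod_cast hl
    nlinarith

/-- Remark 5.  For positive integers `m, l` with `m/2 ≤ l < m`, the
function `p(z) = 2m² z^{m+l} z̄^{m-l} + 4(m²-l²)|z|^{2m} + 2m² z^{m-l} z̄^{m+l}` is
real-valued and subharmonic on `ℂ` (its Laplacian, in the underlying real coordinates of
`ℂ ≅ ℝ²`, is nonnegative), and attains a negative value somewhere. -/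
theorem statement13 (m l : ℕ) (hm : 0 < m) (hl : 0 < l)
    (hml1 : m ≤ 2 * l) (hml2 : l < m)
    (p : ℂ → ℂ)
    (hp : p = fun z => 2 * (m : ℂ) ^ 2 * z ^ (m + l) * ((starRingEnd ℂ) z) ^ (m - l)
      + 4 * ((m : ℂ) ^ 2 - (l : ℂ) ^ 2) * ((‖z‖ : ℝ) : ℂ) ^ (2 * m)
      + 2 * (m : ℂ) ^ 2 * z ^ (m - l) * ((starRingEnd ℂ) z) ^ (m + l)) :
    (∀ z : ℂ, (p z).im = 0) ∧
    (∀ z : ℂ, 0 ≤ iteratedFDeriv ℝ 2 (fun w => (p w).re) z ![1, 1] +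
      iteratedFDeriv ℝ 2 (fun w => (p w).re) z ![Complex.I, Complex.I]) ∧
    (∃ z : ℂ, (p z).re < 0) :=
  statement13_general m l hl hml2 p hp
end
end
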